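/- Let 𝔽 be ℝ or ℂ, X a Banach space over 𝔽 with dim X ≥ 2, and 𝒜 a standard operator algebra in B(X). Define 𝒩₂(𝒜) = {N ∈ 𝒜 : N² = 0}. If Φ : 𝒜 → 𝒜 is a surjective strong 3-commutativity preserving map, then Φ maps the set 𝔽I + 𝒩₂(𝒜) = {λI + N : λ ∈ 𝔽, N ∈ 𝒩₂(𝒜)} onto itself. -/

import Mathlib

set_option synthInstance.maxHeartbeats 400000
set_option maxHeartbeats 1000000

/-- The commutator `[A,B] = AB - BA` in a ring. -/
def bracket1 {R : Type*} [Ring R] (A B : R) : R := A * B - B * A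

/-- The 3-commutator `[A,B]₃ = [[[A,B],B],B]` in a ring. -/
def bracket3 {R : Type*} [Ring R] (A B : R) : R := bracket1 (bracket1 (bracket1 A B) B) B

/-- A standard operator algebra on a normed space `X` over `𝕜` is a subalgebra of
`B(X)` (automatically containing the identity) containing all finite-rank operators. -/
def IsStandardOperatorAlgebra (𝕜 : Type*) [RCLike 𝕜] (X : Type*)
    [NormedAddCommGroup X] [NormedSpace 𝕜 X]
    (𝒜 : Subalgebra 𝕜 (X →L[𝕜] X)) : Prop :=
  ∀ T : X →L[𝕜] X, FiniteDimensional 𝕜 (LinearMap.range (T : X →ₗ[𝕜] X)) → T ∈ 𝒜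

/-!
Because `[Φ B, Φ A]₃ = [B, A]₃` and `Φ` is onto, `Φ` maps the set of `A` with `[B, A]₃ = 0` for
all `B` onto itself, so it suffices to identify this set with `𝔽I + 𝒩₂(𝒜)`. If `N² = 0`, every
term of `[B, N]₃ = BN³ - 3NBN² + 3N²BN - N³B` vanishes. Conversely, test `[B, T]₃ = 0` on rank-one
operators `B = f ⊗ v`. Either every `Tv` lies in `𝔽v`, and then `T` is scalar, or some `z, Tz`
are independent; a functional with `g z = 0`, `g (Tz) = 1` then turns the identity into a
quadratic relation `T² = αT + β`. For `N = T - α/2` this gives `N² = d` scalar, hence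
`[B, N]₃ = 4d [B, N]`; if `d ≠ 0`, `N` commutes with all rank-one operators, which forces
`Tz ∈ 𝔽z`. So `d = 0`.
-/

section Ring

variable {R : Type*} [Ring R]

variable (R) in
def bracket3Center : Set R := {A | ∀ B : R, bracket3 B A = 0}

theorem image_bracket3Center {Φ : R → R} (hsurj : Function.Surjective Φ)
    (hpres : ∀ A B, bracket3 (Φ A) (Φ B) = bracket3 A B) :
    Φ '' bracket3Center R = bracket3Center R := by
  ext C
  constructor
  · rintro ⟨A, hA, rfl⟩ B
    obtain ⟨B, rfl⟩ := hsurj B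
    rw [hpres]
    exact hA B
  · intro hC
    obtain ⟨A, rfl⟩ := hsurj C
    exact ⟨A, fun B => hpres B A ▸ hC (Φ B), rfl⟩

theorem map_bracket3 {S F : Type*} [Ring S] [FunLike F R S] [RingHomClass F R S] (φ : F)
    (A B : R) : φ (bracket3 A B) = bracket3 (φ A) (φ B) := by
  simp only [bracket3, bracket1, map_sub, map_mul]

section Algebra

variable {𝕜 : Type*} [CommRing 𝕜] [Algebra 𝕜 R]

theorem bracket3_eq (B A : R) :
    bracket3 B A = B * A * A * A - (3 : 𝕜) • (A * B * A * A) + (3 : 𝕜) • (A * A * B * A)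
      - A * A * A * B := by
  simp only [bracket3, bracket1, ofNat_smul_eq_nsmul]
  noncomm_ring

theorem bracket1_smul_one_add (B A : R) (c : 𝕜) : bracket1 B (c • 1 + A) = bracket1 B A := by
  simp only [bracket1, mul_add, add_mul, mul_smul_comm, smul_mul_assoc, mul_one, one_mul]
  abel

theorem bracket3_smul_one_add (B A : R) (c : 𝕜) : bracket3 B (c • 1 + A) = bracket3 B A := by
  simp only [bracket3, bracket1_smul_one_add]

theorem bracket3_eq_of_mul_self_eq_smul_one (B : R) {N : R} {d : 𝕜} (hN : N * N = d • 1) :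
    bracket3 B N = (4 * d) • bracket1 B N := by
  have h₁ : B * N * N * N = d • (B * N) := by rw [mul_assoc (B * N), hN, mul_smul_comm, mul_one]
  have h₂ : N * B * N * N = d • (N * B) := by rw [mul_assoc (N * B), hN, mul_smul_comm, mul_one]
  have h₃ : N * N * B * N = d • (B * N) := by rw [hN, smul_mul_assoc, smul_mul_assoc, one_mul]
  have h₄ : N * N * N * B = d • (N * B) := by rw [hN, smul_mul_assoc, smul_mul_assoc, one_mul]
  rw [bracket3_eq (𝕜 := 𝕜), h₁, h₂, h₃, h₄, bracket1]
  module

theorem bracket3_eq_zero_of_mul_self_eq_zero (B : R) {N : R} (hN : N * N = 0) :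
    bracket3 B N = 0 := by
  simpa using bracket3_eq_of_mul_self_eq_smul_one (𝕜 := ℤ) B (d := 0) (by rw [hN, zero_smul])

end Algebra

theorem mul_self_sub_smul_one_eq {𝕜 : Type*} [Field 𝕜] [CharZero 𝕜] [Algebra 𝕜 R] {A : R}
    {α β : 𝕜} (h : A * A = α • A + β • 1) :
    (A - (α / 2) • 1) * (A - (α / 2) • 1) = (β + α ^ 2 / 4) • 1 := by
  simp only [sub_mul, mul_sub, smul_mul_assoc, mul_smul_comm, one_mul, mul_one, h]
  module

end Ring

theorem SeparatingDual.exists_apply_eq_of_linearIndependent {𝕜 X : Type*} [Field 𝕜]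
    [TopologicalSpace 𝕜] [IsTopologicalRing 𝕜] [AddCommGroup X] [TopologicalSpace X] [Module 𝕜 X]
    [SeparatingDual 𝕜 X] {ι : Type*} [Finite ι] {v : ι → X} (hv : LinearIndependent 𝕜 v)
    (c : ι → 𝕜) : ∃ f : StrongDual 𝕜 X, ∀ i, f (v i) = c i := by
  obtain ⟨f, hf⟩ := (dualMap_surjective_iff (f := Finsupp.linearCombination 𝕜 v)).2 hv
    (Finsupp.linearCombination 𝕜 c)
  refine ⟨f, fun i => ?_⟩
  simpa using LinearMap.congr_fun hf (Finsupp.single i 1)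

section Operator

variable {𝕜 X : Type*} [Field 𝕜] [TopologicalSpace 𝕜]
  [AddCommGroup X] [TopologicalSpace X] [IsTopologicalAddGroup X] [Module 𝕜 X]
  [ContinuousSMul 𝕜 X]

theorem bracket3_smulRight_apply (f : StrongDual 𝕜 X) (v : X) (T : X →L[𝕜] X) (w : X) :
    bracket3 (f.smulRight v) T w = f (T (T (T w))) • v - (3 : 𝕜) • f (T (T w)) • T v
      + (3 : 𝕜) • f (T w) • T (T v) - f w • T (T (T v)) := by
  simp [bracket3_eq (𝕜 := 𝕜)]

theorem apply_eq_smul_of_bracket1_smulRight_eq_zero {N : X →L[𝕜] X} {f : StrongDual 𝕜 X}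
    {v : X} (hfv : f v = 1) (h : bracket1 (f.smulRight v) N = 0) : N v = f (N v) • v := by
  have hv : f (N v) • v - N v = 0 := by simpa [bracket1, hfv] using congr($h v)
  exact (sub_eq_zero.1 hv).symm

variable [IsTopologicalRing 𝕜] [SeparatingDual 𝕜 X] [CharZero 𝕜]

theorem exists_mul_self_eq_of_bracket3_smulRight_eq_zero {T : X →L[𝕜] X}
    (hT : ∀ (f : StrongDual 𝕜 X) v, bracket3 (f.smulRight v) T = 0) {z : X}
    (hz : LinearIndependent 𝕜 ![z, T z]) : ∃ α β : 𝕜, T * T = α • T + β • 1 := by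
  obtain ⟨g, hg⟩ := SeparatingDual.exists_apply_eq_of_linearIndependent hz ![0, 1]
  have hgz : g z = 0 := hg 0
  have hgTz : g (T z) = 1 := hg 1
  refine ⟨g (T (T z)), -(3 : 𝕜)⁻¹ * g (T (T (T z))), ContinuousLinearMap.ext fun v => ?_⟩
  have h := congr($(hT g v) z)
  rw [bracket3_smulRight_apply, hgz, hgTz] at h
  simp only [mul_apply_eq_comp, add_apply, smul_apply, one_apply_eq_self, zero_apply] at h ⊢
  linear_combination (norm := module) (3 : 𝕜)⁻¹ • h

theorem exists_smul_one_add_of_bracket3_smulRight_eq_zero (T : X →L[𝕜] X)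
    (hT : ∀ (f : StrongDual 𝕜 X) v, bracket3 (f.smulRight v) T = 0) :
    ∃ (l : 𝕜) (N : X →L[𝕜] X), N * N = 0 ∧ T = l • 1 + N := by
  by_cases hloc : ∀ v, ¬ LinearIndependent 𝕜 ![v, T v]
  · obtain ⟨l, hl⟩ :=
      LinearMap.exists_eq_smul_id_of_forall_notLinearIndependent (f := (T : X →ₗ[𝕜] X)) hloc
    exact ⟨l, 0, mul_zero 0, by ext v; simpa using congr($hl v)⟩
  push Not at hloc
  obtain ⟨z, hz⟩ := hloc
  have hz0 : z ≠ 0 := by simpa using hz.ne_zero 0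
  obtain ⟨α, β, hT2⟩ := exists_mul_self_eq_of_bracket3_smulRight_eq_zero hT hz
  set N := T - (α / 2) • 1 with hN
  have hTN : T = (α / 2) • 1 + N := by rw [hN, add_sub_cancel]
  refine ⟨α / 2, N, ?_, hTN⟩
  suffices hd : β + α ^ 2 / 4 = 0 by rw [mul_self_sub_smul_one_eq hT2, hd, zero_smul]
  by_contra hd
  obtain ⟨f, hf⟩ := SeparatingDual.exists_eq_one (R := 𝕜) hz0
  have hcomm : bracket1 (f.smulRight z) N = 0 := by
    have h := bracket3_eq_of_mul_self_eq_smul_one (f.smulRight z) (mul_self_sub_smul_one_eq hT2)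
    rw [← hN, ← bracket3_smul_one_add _ _ (α / 2), ← hTN, hT, eq_comm, smul_eq_zero] at h
    exact h.resolve_left (mul_ne_zero (by norm_num) hd)
  have hNz := apply_eq_smul_of_bracket1_smulRight_eq_zero hf hcomm
  refine (LinearIndependent.pair_iff' hz0).1 hz (α / 2 + f (N z)) ?_
  rw [hTN, add_apply, smul_apply, one_apply_eq_self, add_smul, ← hNz]

end Operator

namespace IsStandardOperatorAlgebra

variable {𝕜 X : Type*} [RCLike 𝕜] [NormedAddCommGroup X] [NormedSpace 𝕜 X]
  {𝒜 : Subalgebra 𝕜 (X →L[𝕜] X)}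

theorem smulRight_mem (h𝒜 : IsStandardOperatorAlgebra 𝕜 X 𝒜) (f : StrongDual 𝕜 X) (v : X) :
    f.smulRight v ∈ 𝒜 := by
  apply h𝒜
  have hle : LinearMap.range ((f.smulRight v : X →L[𝕜] X) : X →ₗ[𝕜] X) ≤ 𝕜 ∙ v := by
    rintro _ ⟨w, rfl⟩
    exact Submodule.smul_mem _ _ (Submodule.mem_span_singleton_self v)
  exact Submodule.finiteDimensional_of_le hle

theorem bracket3Center_eq (h𝒜 : IsStandardOperatorAlgebra 𝕜 X 𝒜) :
    bracket3Center 𝒜 = {A : 𝒜 | ∃ (l : 𝕜) (N : 𝒜), N * N = 0 ∧ A = l • (1 : 𝒜) + N} := by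
  ext A
  constructor
  · intro hA
    have hT (f : StrongDual 𝕜 X) (v : X) : bracket3 (f.smulRight v) (A : X →L[𝕜] X) = 0 := by
      simpa [map_bracket3] using congr(𝒜.val $(hA ⟨_, h𝒜.smulRight_mem f v⟩))
    obtain ⟨l, N, hN, hAN⟩ := exists_smul_one_add_of_bracket3_smulRight_eq_zero _ hT
    have hNmem : N ∈ 𝒜 := by
      rw [eq_sub_of_add_eq' hAN.symm]
      exact sub_mem A.2 (Subalgebra.smul_mem _ (one_mem _) _)
    exact ⟨l, ⟨N, hNmem⟩, Subtype.ext hN, Subtype.ext hAN⟩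
  · rintro ⟨l, N, hN, rfl⟩ B
    rw [bracket3_smul_one_add]
    exact bracket3_eq_zero_of_mul_self_eq_zero B hN

end IsStandardOperatorAlgebra

theorem stmt_10_general {𝕜 X : Type*} [RCLike 𝕜] [NormedAddCommGroup X] [NormedSpace 𝕜 X]
    (𝒜 : Subalgebra 𝕜 (X →L[𝕜] X)) (h𝒜 : IsStandardOperatorAlgebra 𝕜 X 𝒜)
    (Φ : 𝒜 → 𝒜) (hsurj : Function.Surjective Φ)
    (hpres : ∀ A B : 𝒜, bracket3 (Φ A) (Φ B) = bracket3 A B) :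
    Φ '' {A : 𝒜 | ∃ (l : 𝕜) (N : 𝒜), N * N = 0 ∧ A = l • (1 : 𝒜) + N} =
      {A : 𝒜 | ∃ (l : 𝕜) (N : 𝒜), N * N = 0 ∧ A = l • (1 : 𝒜) + N} := by
  rw [← h𝒜.bracket3Center_eq]
  exact image_bracket3Center hsurj hpres

theorem stmt_10 {𝕜 X : Type*} [RCLike 𝕜] [NormedAddCommGroup X] [NormedSpace 𝕜 X]
    [CompleteSpace X] (hdim : 2 ≤ Module.rank 𝕜 X)
    (𝒜 : Subalgebra 𝕜 (X →L[𝕜] X)) (h𝒜 : IsStandardOperatorAlgebra 𝕜 X 𝒜)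
    (Φ : 𝒜 → 𝒜) (hsurj : Function.Surjective Φ)
    (hpres : ∀ A B : 𝒜, bracket3 (Φ A) (Φ B) = bracket3 A B) :
    Φ '' {A : 𝒜 | ∃ (l : 𝕜) (N : 𝒜), N * N = 0 ∧ A = l • (1 : 𝒜) + N} =
      {A : 𝒜 | ∃ (l : 𝕜) (N : 𝒜), N * N = 0 ∧ A = l • (1 : 𝒜) + N} :=
  stmt_10_general 𝒜 h𝒜 Φ hsurj hpres
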